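/- Let Γ = A₅, B = the stabilizer of 5 (≅ A₄), Δ = ⟨(1 2 3)⟩, and let Γ act on ℝ[Γ] by componentwise conjugation. Then there exist an element w ∈ ℝ[Δ] and an element α ∈ Γ \ B with α · w ∈ ℝ[B] but α · w ∉ B · w; in particular (Γ · w) ∩ ℝ[B] ≠ B · w. -/

import Mathlib

/-!
Take `w = γ = (1 2 3)` and `α = (1 2)(4 5) ∉ A₄`. Then `α·w = γ⁻¹ ∈ ℝ[B]`, but `γ` and `γ⁻¹` are
not conjugate in `A₄` (the two classes of 3-cycles there are swapped by inversion), so `γ⁻¹` is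
not in the `B`-orbit of `w`.
-/

/-- Componentwise conjugation action of `Γ` on its real group algebra `ℝ[Γ]`. -/
noncomputable def conjS {Γ : Type*} [Group Γ] (δ : Γ) (f : MonoidAlgebra ℝ Γ) :
    MonoidAlgebra ℝ Γ :=
  MonoidAlgebra.ofCoeff (Finsupp.mapDomain (fun g => δ * g * δ⁻¹) f.coeff)

/-- The 3-cycle `(1 2 3)` (on letters `0, 1, 2` of `Fin 5`). -/
def c5 : Equiv.Perm (Fin 5) := Equiv.swap 0 1 * Equiv.swap 1 2

theorem hc5 : c5 ∈ alternatingGroup (Fin 5) := by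
  simp [Equiv.Perm.mem_alternatingGroup, c5]

/-- The 3-cycle `(1 2 3)` as an element of `A₅`. -/
def a5c : ↥(alternatingGroup (Fin 5)) := ⟨c5, hc5⟩

/-- `Δ = ⟨(1 2 3)⟩ ≤ A₅`. -/
def Δ5 : Subgroup ↥(alternatingGroup (Fin 5)) := Subgroup.zpowers a5c

/-- `B ≤ A₅`, the stabilizer of the letter `5` (here `4 : Fin 5`), a copy of `A₄`. -/
def B5 : Subgroup ↥(alternatingGroup (Fin 5)) :=
  MulAction.stabilizer ↥(alternatingGroup (Fin 5)) (4 : Fin 5)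

open Finsupp
open MonoidAlgebra (ofCoeff coeff_ofCoeff ofCoeff_inj)

section Conjugation

variable {Γ : Type*} [Group Γ]

theorem conjS_ofCoeff_single (δ g : Γ) (r : ℝ) :
    conjS δ (ofCoeff (single g r)) = ofCoeff (single (δ * g * δ⁻¹) r) := by
  rw [conjS, coeff_ofCoeff, mapDomain_single]

theorem conjS_ofCoeff_single_one_eq_iff {δ δ' g : Γ} :
    conjS δ (ofCoeff (single g (1 : ℝ))) = conjS δ' (ofCoeff (single g 1)) ↔
      δ * g * δ⁻¹ = δ' * g * δ'⁻¹ := by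
  rw [conjS_ofCoeff_single, conjS_ofCoeff_single, ofCoeff_inj, single_left_inj one_ne_zero]

theorem orbit_inter_ne_orbit_of_conjS_mem {H : Subgroup Γ} {w : MonoidAlgebra ℝ Γ} {α : Γ}
    (hα : (conjS α w).coeff ∈ supported ℝ ℝ (H : Set Γ))
    (hne : ∀ b ∈ H, conjS b w ≠ conjS α w) :
    {x | ∃ g : Γ, conjS g w = x} ∩ {x : MonoidAlgebra ℝ Γ | x.coeff ∈ supported ℝ ℝ (H : Set Γ)} ≠
      {x | ∃ b ∈ H, conjS b w = x} := by
  intro h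
  have hmem : conjS α w ∈ {x | ∃ g : Γ, conjS g w = x} ∩
      {x : MonoidAlgebra ℝ Γ | x.coeff ∈ supported ℝ ℝ (H : Set Γ)} := ⟨⟨α, rfl⟩, hα⟩
  obtain ⟨b, hb, hbα⟩ := h ▸ hmem
  exact hne b hb hbα

theorem exists_not_saturated_witness_of_conj (B : Subgroup Γ) (Δ : Set Γ) {γ α : Γ}
    (hγ : γ ∈ Δ) (hα : α ∉ B) (hαγ : α * γ * α⁻¹ ∈ B)
    (hB : ∀ b ∈ B, b * γ * b⁻¹ ≠ α * γ * α⁻¹) :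
    ∃ w : MonoidAlgebra ℝ Γ, w.coeff ∈ supported ℝ ℝ Δ ∧
      ∃ α : Γ, α ∉ B ∧ (conjS α w).coeff ∈ supported ℝ ℝ (B : Set Γ) ∧
        (∀ b ∈ B, conjS b w ≠ conjS α w) ∧
        {x | ∃ g : Γ, conjS g w = x} ∩
            {x : MonoidAlgebra ℝ Γ | x.coeff ∈ supported ℝ ℝ (B : Set Γ)} ≠
          {x | ∃ b ∈ B, conjS b w = x} := by
  have hαw : (conjS α (ofCoeff (single γ (1 : ℝ)))).coeff ∈ supported ℝ ℝ (B : Set Γ) := by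
    rw [conjS_ofCoeff_single, coeff_ofCoeff]
    exact single_mem_supported ℝ 1 hαγ
  have hne : ∀ b ∈ B, conjS b (ofCoeff (single γ (1 : ℝ))) ≠ conjS α (ofCoeff (single γ 1)) :=
    fun b hb h => hB b hb (conjS_ofCoeff_single_one_eq_iff.mp h)
  exact ⟨ofCoeff (single γ 1), single_mem_supported ℝ 1 hγ, α, hα, hαw, hne,
    orbit_inter_ne_orbit_of_conjS_mem hαw hne⟩

end Conjugation

def d5 : Equiv.Perm (Fin 5) := Equiv.swap 0 1 * Equiv.swap 3 4

theorem d5_mem_alternatingGroup : d5 ∈ alternatingGroup (Fin 5) := by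
  simp [Equiv.Perm.mem_alternatingGroup, d5]

def a5d : ↥(alternatingGroup (Fin 5)) := ⟨d5, d5_mem_alternatingGroup⟩

theorem mem_B5_iff {b : ↥(alternatingGroup (Fin 5))} :
    b ∈ B5 ↔ (b : Equiv.Perm (Fin 5)) 4 = 4 :=
  MulAction.mem_stabilizer_iff

theorem a5c_mem_B5 : a5c ∈ B5 := mem_B5_iff.mpr (by decide)

theorem a5d_notMem_B5 : a5d ∉ B5 := fun h => absurd (mem_B5_iff.mp h) (by decide)

theorem a5d_conj_a5c : a5d * a5c * a5d⁻¹ = a5c⁻¹ := Subtype.ext (by decide)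

set_option maxRecDepth 10000 in
theorem conj_a5c_ne_inv_of_mem_B5 {b : ↥(alternatingGroup (Fin 5))} (hb : b ∈ B5) :
    b * a5c * b⁻¹ ≠ a5c⁻¹ := by
  have key : ∀ σ : Equiv.Perm (Fin 5), Equiv.Perm.sign σ = 1 → σ 4 = 4 →
      σ * c5 * σ⁻¹ ≠ c5⁻¹ := by decide
  exact fun h => key b b.2 (mem_B5_iff.mp hb) (congrArg Subtype.val h)

/-- There is `w ∈ ℝ[Δ]` and `α ∈ A₅ \\ B` with `α·w ∈ ℝ[B]` but `α·w ∉ B·w`; in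
particular `(A₅·w) ∩ ℝ[B] ≠ B·w`, so the suborbifold is not saturated. -/
theorem not_saturated_witness :
    ∃ w : MonoidAlgebra ℝ ↥(alternatingGroup (Fin 5)),
      w.coeff ∈ Finsupp.supported ℝ ℝ (Δ5 : Set ↥(alternatingGroup (Fin 5))) ∧
      ∃ α : ↥(alternatingGroup (Fin 5)), α ∉ B5 ∧
        (conjS α w).coeff ∈ Finsupp.supported ℝ ℝ (B5 : Set ↥(alternatingGroup (Fin 5))) ∧
        (∀ b ∈ B5, conjS b w ≠ conjS α w) ∧
        {x | ∃ g : ↥(alternatingGroup (Fin 5)), conjS g w = x} ∩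
            {x : MonoidAlgebra ℝ ↥(alternatingGroup (Fin 5)) |
              x.coeff ∈ Finsupp.supported ℝ ℝ (B5 : Set ↥(alternatingGroup (Fin 5)))} ≠
          {x | ∃ b ∈ B5, conjS b w = x} := by
  refine exists_not_saturated_witness_of_conj B5 Δ5 (Subgroup.mem_zpowers a5c) a5d_notMem_B5 ?_ ?_
  · rw [a5d_conj_a5c]
    exact B5.inv_mem a5c_mem_B5
  · intro b hb
    rw [a5d_conj_a5c]
    exact conj_a5c_ne_inv_of_mem_B5 hb
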